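/- arXiv:1807.11341 — 2 statements merged into one kernel-verified Lean document; each statement's English description precedes it below -/
import Mathlib

section
/- Let Γ be a Lie group acting properly on a manifold P, let G' be a closed normal subgroup of Γ, and suppose the quotients P/G' = M' and Γ/G' = [G] exist as smooth manifolds with the induced action of [G] on M' given by π'(p)·[g] = π'(p·g). If the Γ-action on P is proper and π' admits local sections, then the induced [G]-action on M' is proper. -/
/-!
Local sections make `π'` a quotient map, and since its fibres are `G'`-orbits it is also open.
Properness of the `Γ`-action makes the orbit relation of the closed subgroup `G'` closed, so `M'`
is Hausdorff. In a Hausdorff base, local sections lift a compact `K' ⊆ M'` to a compact `C ⊆ P`;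
every class `[γ]` moving a point of `K'` into `K'` has a representative moving a point of `C`
into `C`, and by properness these representatives form a compact subset of `Γ`.
-/

open Set Topology Pointwise

def AdmitsLocalSections {X Y : Type*} [TopologicalSpace X] [TopologicalSpace Y] (f : X → Y) :
    Prop :=
  ∀ y : Y, ∃ U : Set Y, IsOpen U ∧ y ∈ U ∧ ∃ s : Y → X, ContinuousOn s U ∧ ∀ x ∈ U, f (s x) = x

namespace AdmitsLocalSections

variable {X Y : Type*} [TopologicalSpace X] [TopologicalSpace Y] {f : X → Y}

theorem isOpen_of_isOpen_preimage (hf : AdmitsLocalSections f) {W : Set Y}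
    (hW : IsOpen (f ⁻¹' W)) : IsOpen W := by
  refine isOpen_iff_mem_nhds.mpr fun y hy => ?_
  obtain ⟨U, hU, hyU, s, hs, hfs⟩ := hf y
  have hsW : IsOpen (U ∩ s ⁻¹' (f ⁻¹' W)) := hs.isOpen_inter_preimage hU hW
  refine Filter.mem_of_superset (hsW.mem_nhds ⟨hyU, ?_⟩) fun x ⟨hxU, hx⟩ => ?_
  · simpa [mem_preimage, hfs y hyU] using hy
  · simpa [mem_preimage, hfs x hxU] using hx

theorem exists_isCompact_subset_image [T2Space Y] (hf : AdmitsLocalSections f) {K : Set Y}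
    (hK : IsCompact K) : ∃ C : Set X, IsCompact C ∧ K ⊆ f '' C := by
  choose U hU hyU s hs hfs using hf
  obtain ⟨t, ht⟩ := hK.elim_finite_subcover U hU fun y _ => mem_iUnion.mpr ⟨y, hyU y⟩
  obtain ⟨L, hL, hLU, hKL⟩ := hK.finite_compact_cover t U (fun y _ => hU y) ht
  refine ⟨⋃ y ∈ t, s y '' L y,
    t.isCompact_biUnion fun y _ => (hL y).image_of_continuousOn ((hs y).mono (hLU y)), ?_⟩
  rw [hKL, image_iUnion₂]
  exact iUnion₂_mono fun y _ x hx => ⟨s y x, mem_image_of_mem _ hx, hfs y x (hLU y hx)⟩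

end AdmitsLocalSections

section ProperAction

variable {Γ : Type*} [Group Γ] {P : Type*} [TopologicalSpace P] [MulAction Γ P]

theorem isOpenMap_of_fibers_eq_orbits [ContinuousConstSMul Γ P] {M : Type*}
    [TopologicalSpace M] {π : P → M} (hπ : AdmitsLocalSections π) {G : Subgroup Γ}
    (hfib : ∀ p q : P, π p = π q ↔ ∃ g ∈ G, g • p = q) : IsOpenMap π := by
  intro V hV
  have hsat : π ⁻¹' (π '' V) = ⋃ g : G, (g : Γ) • V := by
    ext q
    simp only [mem_preimage, mem_image, mem_iUnion, mem_smul_set]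
    constructor
    · rintro ⟨p, hp, hpq⟩
      obtain ⟨g, hg, rfl⟩ := (hfib p q).mp hpq
      exact ⟨⟨g, hg⟩, p, hp, rfl⟩
    · rintro ⟨g, p, hp, rfl⟩
      exact ⟨p, hp, (hfib p _).mpr ⟨g, g.2, rfl⟩⟩
  exact hπ.isOpen_of_isOpen_preimage (hsat ▸ isOpen_iUnion fun g => hV.smul _)

variable [TopologicalSpace Γ]

theorem isClosed_setOf_exists_smul_eq
    (hproper : IsProperMap fun pg : P × Γ => (pg.1, pg.2 • pg.1))
    {G : Subgroup Γ} (hG : IsClosed (G : Set Γ)) :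
    IsClosed {x : P × P | ∃ g ∈ G, g • x.1 = x.2} := by
  convert hproper.isClosedMap _ (isClosed_univ.prod hG) using 1
  ext ⟨p, q⟩
  simp [eq_comm]

theorem isCompact_setOf_exists_smul_mem
    (hproper : IsProperMap fun pg : P × Γ => (pg.1, pg.2 • pg.1)) {C : Set P} (hC : IsCompact C) :
    IsCompact {γ : Γ | ∃ p ∈ C, γ • p ∈ C} := by
  convert (hproper.isCompact_preimage (hC.prod hC)).image continuous_snd using 1
  ext γ
  simp

theorem t2Space_of_fibers_eq_orbits [ContinuousConstSMul Γ P]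
    (hproper : IsProperMap fun pg : P × Γ => (pg.1, pg.2 • pg.1))
    {G : Subgroup Γ} (hG : IsClosed (G : Set Γ)) {M : Type*} [TopologicalSpace M] {π : P → M}
    (hcont : Continuous π) (hsurj : Function.Surjective π) (hπ : AdmitsLocalSections π)
    (hfib : ∀ p q : P, π p = π q ↔ ∃ g ∈ G, g • p = q) : T2Space M := by
  have hπ' : IsOpenQuotientMap π := ⟨hsurj, hcont, isOpenMap_of_fibers_eq_orbits hπ hfib⟩
  rw [t2Space_iff_of_isOpenQuotientMap hπ']
  simpa only [hfib] using isClosed_setOf_exists_smul_eq hproper hG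

end ProperAction

theorem setOf_exists_mem_mem_subset_image_mk {Γ : Type*} [Group Γ] {P : Type*}
    [MulAction Γ P] {G : Subgroup Γ} [G.Normal] {M : Type*} {π : P → M}
    (hfib : ∀ p q : P, π p = π q → ∃ g ∈ G, g • p = q) (a : M → Γ ⧸ G → M)
    (ha : ∀ (p : P) (γ : Γ), a (π p) γ = π (γ • p)) {K : Set M} {C : Set P}
    (hKC : K ⊆ π '' C) :
    {q : Γ ⧸ G | ∃ m ∈ K, a m q ∈ K} ⊆ QuotientGroup.mk '' {γ : Γ | ∃ p ∈ C, γ • p ∈ C} := by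
  rintro q ⟨m, hm, hq⟩
  obtain ⟨γ, rfl⟩ := QuotientGroup.mk_surjective q
  obtain ⟨p, hp, rfl⟩ := hKC hm
  obtain ⟨p', hp', hp'γ⟩ := hKC (ha p γ ▸ hq)
  obtain ⟨g, hg, hgp⟩ := hfib _ _ hp'γ.symm
  refine ⟨g * γ, ⟨p, hp, by rwa [mul_smul, hgp]⟩, ?_⟩
  rw [QuotientGroup.mk_mul, (QuotientGroup.eq_one_iff g).mpr hg, one_mul]

/-- Let a (Lie) group `Γ` act continuously and properly on `P`, let `G'` be a closed
normal subgroup, `π' : P → M' = P/G'` the orbit projection (surjective, continuous,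
admitting local continuous sections), `pr : Γ → [G] = Γ/G'` the quotient map, and let
`a` be the induced action of `[G]` on `M'`, determined by `a (π' p) (pr γ) = π' (γ • p)`.
Then the induced action is proper: for every compact `K' ⊆ M'` the returning set
`{q ∈ [G] | K'·q ∩ K' ≠ ∅}` is relatively compact. -/
theorem stmt_9 {Γ : Type*} [Group Γ] [TopologicalSpace Γ] [IsTopologicalGroup Γ]
    {P : Type*} [TopologicalSpace P] [MulAction Γ P] [ContinuousSMul Γ P]
    (hproper : IsProperMap (fun pg : P × Γ => (pg.1, pg.2 • pg.1)))
    (G' : Subgroup Γ) [G'.Normal] (hG' : IsClosed (G' : Set Γ))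
    {M' : Type*} [TopologicalSpace M'] (π' : P → M')
    (hπcont : Continuous π') (hπsurj : Function.Surjective π')
    (hfib : ∀ p q : P, π' p = π' q ↔ ∃ g' ∈ G', g' • p = q)
    (hsec : ∀ m : M', ∃ U : Set M', IsOpen U ∧ m ∈ U ∧
      ∃ s : M' → P, ContinuousOn s U ∧ ∀ x ∈ U, π' (s x) = x)
    (a : M' → Γ ⧸ G' → M')
    (ha : ∀ (p : P) (γ : Γ), a (π' p) (QuotientGroup.mk γ) = π' (γ • p)) :
    ∀ K' : Set M', IsCompact K' →
      IsCompact (closure {q : Γ ⧸ G' | ∃ m ∈ K', a m q ∈ K'}) := by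
  intro K' hK'
  have : IsClosed (G' : Set Γ) := hG'
  have : T2Space M' := t2Space_of_fibers_eq_orbits hproper hG' hπcont hπsurj hsec hfib
  obtain ⟨C, hC, hK'C⟩ := AdmitsLocalSections.exists_isCompact_subset_image hsec hK'
  have hL : IsCompact ((QuotientGroup.mk : Γ → Γ ⧸ G') '' {γ | ∃ p ∈ C, γ • p ∈ C}) :=
    (isCompact_setOf_exists_smul_mem hproper hC).image QuotientGroup.continuous_mk
  exact hL.closure_of_subset
    (setOf_exists_mem_mem_subset_image_mk (fun p q => (hfib p q).mp) a ha hK'C)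
end

section
/- Let ρ : G × 𝒢 → 𝒢 be a compatible action of a Lie group G on a Lie groupoid 𝒢 ⇉ M. If the induced action of G/ker(ρ) on the unit manifold M is free and proper, then the induced action of G/ker(ρ) on 𝒢 is free and proper (i.e. ρ is pre-principal). -/
/-!
The source map is `G`-equivariant, so whatever fixes an arrow `a` fixes its source `s a`, and
whatever moves an arrow of `K` back into `K` moves a point of the compact set `s '' K` back into
`s '' K`. Hence stabilizers and returning sets on the arrows sit inside those on the units.
-/

section EquivariantTransfer

variable {G α β : Type*} [SMul G α] [SMul G β] {f : α → β}

theorem smul_eq_self_of_equivariant (hf : ∀ (g : G) (a : α), f (g • a) = g • f a)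
    {g : G} {a : α} (h : g • a = a) : g • f a = f a := by
  rw [← hf, h]

theorem setOf_smul_mem_subset_image (hf : ∀ (g : G) (a : α), f (g • a) = g • f a)
    (K : Set α) :
    {g : G | ∃ a ∈ K, g • a ∈ K} ⊆ {g : G | ∃ x ∈ f '' K, g • x ∈ f '' K} := by
  rintro g ⟨a, haK, hgaK⟩
  exact ⟨f a, Set.mem_image_of_mem f haK, g • a, hgaK, hf g a⟩

theorem isCompact_closure_image_setOf_smul_mem_of_equivariant
    [TopologicalSpace α] [TopologicalSpace β] {Q : Type*} [TopologicalSpace Q] (π : G → Q)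
    (hf : ∀ (g : G) (a : α), f (g • a) = g • f a) (hfc : Continuous f)
    (hproper : ∀ L : Set β, IsCompact L →
      IsCompact (closure (π '' {g : G | ∃ x ∈ L, g • x ∈ L})))
    {K : Set α} (hK : IsCompact K) :
    IsCompact (closure (π '' {g : G | ∃ a ∈ K, g • a ∈ K})) :=
  (hproper _ (hK.image hfc)).of_isClosed_subset isClosed_closure
    (closure_mono (Set.image_mono (setOf_smul_mem_subset_image hf K)))

end EquivariantTransfer

theorem stmt_11_general {G : Type*} [Group G] [TopologicalSpace G]
    {A M : Type*} [TopologicalSpace A] [TopologicalSpace M]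
    [MulAction G A] [MulAction G M]
    (s : A → M) (hs : Continuous s)
    (hs_equiv : ∀ (g : G) (a : A), s (g • a) = g • s a) :
    let N : Subgroup G := (MulAction.toPermHom G A).ker
    -- freeness of the induced `G/N`-action on `M` ...
    (∀ (x : M) (g : G), g • x = x → g ∈ N) →
    -- ... and properness on `M`
    (∀ K : Set M, IsCompact K →
      IsCompact (closure
        (QuotientGroup.mk '' {g : G | ∃ x ∈ K, g • x ∈ K} : Set (G ⧸ N)))) →
    -- imply freeness and properness of the induced `G/N`-action on `𝒢`:
    (∀ (a : A) (g : G), g • a = a → g ∈ N) ∧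
    (∀ K : Set A, IsCompact K →
      IsCompact (closure
        (QuotientGroup.mk '' {g : G | ∃ a ∈ K, g • a ∈ K} : Set (G ⧸ N)))) := by
  intro N hfree hproper
  exact ⟨fun a g hga => hfree (s a) g (smul_eq_self_of_equivariant hs_equiv hga),
    fun _ hK => isCompact_closure_image_setOf_smul_mem_of_equivariant _ hs_equiv hs hproper hK⟩

/-- Let `G` act on a (Lie) groupoid `𝒢` (arrows `A`, units `M ⊂ A` via `unit`, source
`s`), compatibly: the action preserves the units and commutes with the source map.
Let `N = ker ρ` be the kernel of the action.  If the induced action of `G/N` on the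
unit manifold `M` is free and proper, then the induced action of `G/N` on `𝒢` is free
and proper (`ρ` is pre-principal). -/
theorem stmt_11 {G : Type*} [Group G] [TopologicalSpace G] [IsTopologicalGroup G]
    {A M : Type*} [TopologicalSpace A] [TopologicalSpace M]
    [MulAction G A] [ContinuousSMul G A] [MulAction G M] [ContinuousSMul G M]
    (s : A → M) (unit : M → A) (hs : Continuous s)
    (hsu : ∀ x, s (unit x) = x)
    (hs_equiv : ∀ (g : G) (a : A), s (g • a) = g • s a)
    (hunit_equiv : ∀ (g : G) (x : M), g • unit x = unit (g • x)) :
    let N : Subgroup G := (MulAction.toPermHom G A).ker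
    -- freeness of the induced `G/N`-action on `M` ...
    (∀ (x : M) (g : G), g • x = x → g ∈ N) →
    -- ... and properness on `M`
    (∀ K : Set M, IsCompact K →
      IsCompact (closure
        (QuotientGroup.mk '' {g : G | ∃ x ∈ K, g • x ∈ K} : Set (G ⧸ N)))) →
    -- imply freeness and properness of the induced `G/N`-action on `𝒢`:
    (∀ (a : A) (g : G), g • a = a → g ∈ N) ∧
    (∀ K : Set A, IsCompact K →
      IsCompact (closure
        (QuotientGroup.mk '' {g : G | ∃ a ∈ K, g • a ∈ K} : Set (G ⧸ N)))) :=
  stmt_11_general s hs hs_equiv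
end
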